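/- arXiv:1511.01207 — 2 statements merged into one kernel-verified Lean document; each statement's English description precedes it below -/
import Mathlib

section
/- Let ℳ = 𝒮 × ℋ be a bounded discrete market (for each H ∈ ℋ there exists n(H) with N_H(S) ≤ n(H) for all S ∈ 𝒮), let k ≥ 0 and S^k ∈ 𝒮. If every node (S, j) with j ≥ k and S ∈ 𝒮_(S^k,k) is 0-neutral, then ℳ is conditionally 0-neutral at (S^k, k), i.e. V̄_k(S^k, 0, ℳ) = 0 where 0 denotes the identically zero payoff function. -/
open scoped BigOperators

structure Portfolio where
  pos : ℕ → (ℕ → ℝ) → ℝ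
  N : (ℕ → ℝ) → ℕ

structure Market where
  s0 : ℝ
  T : Set (ℕ → ℝ)
  P : Set Portfolio
  start : ∀ S ∈ T, S 0 = s0
  nonanticipative : ∀ H ∈ P, ∀ i : ℕ, ∀ S ∈ T, ∀ S' ∈ T,
    (∀ k ≤ i, S k = S' k) → H.pos i S = H.pos i S'
  liquidate : ∀ H ∈ P, ∀ S ∈ T, ∀ k : ℕ, H.N S ≤ k → H.pos k S = 0
  zero_mem : (⟨fun _ _ => 0, fun _ => 0⟩ : Portfolio) ∈ P

def StoppingTime (T : Set (ℕ → ℝ)) (ν : (ℕ → ℝ) → ℕ) : Prop :=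
  ∀ S ∈ T, ∀ S' ∈ T, (∀ k ≤ ν S, S' k = S k) → ν S' = ν S

namespace Market

/-- The conditional trajectory set `𝒮_(S,k)`. -/
def cond (M : Market) (S : ℕ → ℝ) (k : ℕ) : Set (ℕ → ℝ) :=
  {S' | S' ∈ M.T ∧ ∀ i ≤ k, S' i = S i}

/-- The conditional upper minmax bound `V̄_k(S, Z, ℳ)`. -/
noncomputable def Vbar (M : Market) (k : ℕ) (S : ℕ → ℝ) (Z : (ℕ → ℝ) → ℝ) : EReal :=
  ⨅ H ∈ M.P, ⨆ S' ∈ M.cond S k,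
    ((Z S' - ∑ i ∈ Finset.Ico k (H.N S'), H.pos i S' * (S' (i + 1) - S' i) : ℝ) : EReal)

/-- The conditional lower minmax bound `V̲_k(S, Z, ℳ) = -V̄_k(S, -Z, ℳ)`. -/
noncomputable def Vlow (M : Market) (k : ℕ) (S : ℕ → ℝ) (Z : (ℕ → ℝ) → ℝ) : EReal :=
  - M.Vbar k S (fun S' => - Z S')

/-- The node `(S, j)` is 0-neutral. -/
def ZeroNeutralNode (M : Market) (S : ℕ → ℝ) (j : ℕ) : Prop :=
  0 ≤ (⨆ S' ∈ M.cond S j, ((S' (j + 1) - S j : ℝ) : EReal)) ∧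
    (⨅ S' ∈ M.cond S j, ((S' (j + 1) - S j : ℝ) : EReal)) ≤ 0

/-- The node `(S, j)` satisfies the up-down property. -/
def UpDownNode (M : Market) (S : ℕ → ℝ) (j : ℕ) : Prop :=
  0 < (⨆ S' ∈ M.cond S j, ((S' (j + 1) - S j : ℝ) : EReal)) ∧
    (⨅ S' ∈ M.cond S j, ((S' (j + 1) - S j : ℝ) : EReal)) < 0

/-- Positive arbitrage node. -/
def PosArbNode (M : Market) (S : ℕ → ℝ) (j : ℕ) : Prop :=
  0 < (⨆ S' ∈ M.cond S j, ((S' (j + 1) - S j : ℝ) : EReal)) ∧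
    (⨅ S' ∈ M.cond S j, ((S' (j + 1) - S j : ℝ) : EReal)) = 0

/-- Negative arbitrage node. -/
def NegArbNode (M : Market) (S : ℕ → ℝ) (j : ℕ) : Prop :=
  (⨆ S' ∈ M.cond S j, ((S' (j + 1) - S j : ℝ) : EReal)) = 0 ∧
    (⨅ S' ∈ M.cond S j, ((S' (j + 1) - S j : ℝ) : EReal)) < 0

def LocallyZeroNeutral (M : Market) : Prop :=
  ∀ S ∈ M.T, ∀ j : ℕ, M.ZeroNeutralNode S j

/-- `ℳ` is `n`-bounded. -/
def NBounded (M : Market) (n : ℕ) : Prop :=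
  ∀ H ∈ M.P, ∀ S ∈ M.T, H.N S ≤ n

/-- `M(S) = sup_{H ∈ ℋ} N_H(S)`. -/
noncomputable def Mx (M : Market) (S : ℕ → ℝ) : ℕ :=
  sSup ((fun H : Portfolio => H.N S) '' M.P)

/-- `I^k_S = {H_k(S) : H ∈ ℋ}`. -/
def Iset (M : Market) (k : ℕ) (S : ℕ → ℝ) : Set ℝ :=
  {u : ℝ | ∃ H ∈ M.P, H.pos k S = u}

/-- `U` is the family of dynamic bounds `Ū_i(·, Z, ℳ)` (EReal-valued version,
with the local infimum taken over portfolios). -/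
def IsDynU (M : Market) (Z : (ℕ → ℝ) → ℝ) (U : ℕ → (ℕ → ℝ) → EReal) : Prop :=
  ∀ S ∈ M.T,
    (∀ i : ℕ, M.Mx S < i → U i S = 0) ∧
    U (M.Mx S) S = (Z S : EReal) ∧
    ∀ i : ℕ, i < M.Mx S →
      U i S = ⨅ H ∈ M.P, ⨆ S' ∈ M.cond S i,
        (U (i + 1) S' - ((H.pos i S * (S' (i + 1) - S i) : ℝ) : EReal))

/-- `U` is the family of dynamic bounds `Ū_i(·, Z, ℳ)` (finite, real-valued version,
with the local infimum taken over `I^i_S`). -/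
def IsDynUR (M : Market) (Z : (ℕ → ℝ) → ℝ) (U : ℕ → (ℕ → ℝ) → ℝ) : Prop :=
  ∀ S ∈ M.T,
    (∀ i : ℕ, M.Mx S < i → U i S = 0) ∧
    U (M.Mx S) S = Z S ∧
    ∀ i : ℕ, i < M.Mx S →
      ((U i S : ℝ) : EReal) = ⨅ u ∈ M.Iset i S, ⨆ S' ∈ M.cond S i,
        ((U (i + 1) S' - u * (S' (i + 1) - S i) : ℝ) : EReal)

/-- `ℳ` is u-complete with respect to `Z` (relative to the dynamic bounds `U`). -/
def UComplete (M : Market) (Z : (ℕ → ℝ) → ℝ) (U : ℕ → (ℕ → ℝ) → EReal) : Prop :=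
  ∀ S ∈ M.T, ∀ k : ℕ, 1 ≤ k → k < M.Mx S →
    ∃ H ∈ M.P, U k S = ⨆ S' ∈ M.cond S k,
      (U (k + 1) S' - ((H.pos k S * (S' (k + 1) - S k) : ℝ) : EReal))

/-- The portfolio set of `ℳ` is FULL. -/
def IsFULL (M : Market) : Prop :=
  ∀ k : ℕ, ∀ Sstar ∈ M.T, ∀ j : ℕ, k ≤ j →
    ∀ f : (ℕ → ℝ) → ℝ,
      (∀ S ∈ M.cond Sstar k, ∃ H ∈ M.P, ∃ S' ∈ M.cond Sstar k, H.pos j S' = f S) →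
      (∀ S ∈ M.cond Sstar k, ∀ S' ∈ M.cond Sstar k, (∀ l ≤ j, S l = S' l) → f S = f S') →
      ∃ H ∈ M.P, ∀ S ∈ M.cond Sstar k, H.pos j S = f S

/-- `𝒮⁺_(S,i)`. -/
def Splus (M : Market) (S : ℕ → ℝ) (i : ℕ) : Set (ℕ → ℝ) :=
  {S' | S' ∈ M.cond S i ∧ S i < S' (i + 1)}

/-- `𝒮⁻_(S,i)`. -/
def Sminus (M : Market) (S : ℕ → ℝ) (i : ℕ) : Set (ℕ → ℝ) :=
  {S' | S' ∈ M.cond S i ∧ S' (i + 1) ≤ S i}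

/-- `𝒮⁺_(S,i)` with the strict inequality interchanged. -/
def SplusAlt (M : Market) (S : ℕ → ℝ) (i : ℕ) : Set (ℕ → ℝ) :=
  {S' | S' ∈ M.cond S i ∧ S i ≤ S' (i + 1)}

/-- `𝒮⁻_(S,i)` with the strict inequality interchanged. -/
def SminusAlt (M : Market) (S : ℕ → ℝ) (i : ℕ) : Set (ℕ → ℝ) :=
  {S' | S' ∈ M.cond S i ∧ S' (i + 1) < S i}

/-- `𝒮^=_(S,i)`. -/
def Seq (M : Market) (S : ℕ → ℝ) (i : ℕ) : Set (ℕ → ℝ) :=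
  {S' | S' ∈ M.cond S i ∧ S' (i + 1) = S i}

end Market

/-- The slope `u_(S⁺,S⁻)` of the chord joining the graph points of `Ū_{i+1}`. -/
noncomputable def chSlope (U : ℕ → (ℕ → ℝ) → ℝ) (i : ℕ) (Sp Sm : ℕ → ℝ) : ℝ :=
  (U (i + 1) Sp - U (i + 1) Sm) / (Sp (i + 1) - Sm (i + 1))

namespace Market

/-- The convex hull quantity `L_i(S, Z, ℳ)`. -/
noncomputable def Lval (M : Market) (U : ℕ → (ℕ → ℝ) → ℝ) (S : ℕ → ℝ) (i : ℕ) : EReal :=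
  ⨆ Sp ∈ M.Splus S i, ⨆ Sm ∈ M.Sminus S i,
    ((U (i + 1) Sp - chSlope U i Sp Sm * (Sp (i + 1) - S i) : ℝ) : EReal)

/-- The convex hull quantity `L_i(S, Z, ℳ)` with the roles of the strict and
non-strict inequalities interchanged. -/
noncomputable def LvalAlt (M : Market) (U : ℕ → (ℕ → ℝ) → ℝ) (S : ℕ → ℝ) (i : ℕ) : EReal :=
  ⨆ Sp ∈ M.SplusAlt S i, ⨆ Sm ∈ M.SminusAlt S i,
    ((U (i + 1) Sp - chSlope U i Sp Sm * (Sp (i + 1) - S i) : ℝ) : EReal)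

end Market

/-- The nested supremum appearing in the iterated expression of the global bound:
`nestedSup M H Z r k S` is the `r`-fold nested supremum starting at stage `k` from
the trajectory `S`. -/
noncomputable def nestedSup (M : Market) (H : Portfolio) (Z : (ℕ → ℝ) → ℝ) :
    ℕ → ℕ → (ℕ → ℝ) → EReal
  | 0, _, S => ((Z S : ℝ) : EReal)
  | r + 1, k, S => ⨆ S' ∈ M.cond S k,
      (((-(H.pos k S' * (S' (k + 1) - S' k)) : ℝ) : EReal) + nestedSup M H Z r (k + 1) S')

/-
The zero portfolio shows `V̄_k(S^k, 0, ℳ) ≤ 0`. Conversely, fix `H ∈ ℋ` with `N_H ≤ n`. At a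
0-neutral node the next increment can be made `< δ` and also `> -δ` for every `δ > 0`, so
whatever the (already determined) position `H_j`, some continuation makes the one-step gain
`H_j Δ_j S` smaller than any prescribed `ε > 0`. Choosing such continuations successively at
times `k, …, n - 1` with budgets `ε / 2, ε / 4, …` gives a trajectory whose total gain is `< ε`,
hence a payoff `> -ε`; so the supremum over trajectories is `≥ 0` for every `H`.
-/

open Finset

def Portfolio.gains (H : Portfolio) (j n : ℕ) (S : ℕ → ℝ) : ℝ :=
  ∑ i ∈ Ico j n, H.pos i S * (S (i + 1) - S i)

namespace Portfolio

lemma gains_of_le (H : Portfolio) {j n : ℕ} (S : ℕ → ℝ) (h : n ≤ j) : H.gains j n S = 0 := by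
  simp [gains, Ico_eq_empty_of_le h]

lemma gains_eq_add (H : Portfolio) {j n : ℕ} (S : ℕ → ℝ) (h : j < n) :
    H.gains j n S = H.pos j S * (S (j + 1) - S j) + H.gains (j + 1) n S :=
  sum_eq_sum_Ico_succ_bot h _

end Portfolio

namespace Market

variable (M : Market)

lemma mem_cond_self {S : ℕ → ℝ} (hS : S ∈ M.T) (k : ℕ) : S ∈ M.cond S k :=
  ⟨hS, fun _ _ => rfl⟩

lemma mem_cond_trans {S S₁ S₂ : ℕ → ℝ} {j i : ℕ} (h₂ : S₂ ∈ M.cond S₁ i)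
    (h₁ : S₁ ∈ M.cond S j) (hji : j ≤ i) : S₂ ∈ M.cond S j :=
  ⟨h₂.1, fun l hl => (h₂.2 l (hl.trans hji)).trans (h₁.2 l hl)⟩

lemma gains_liquidation_eq {H : Portfolio} (hH : H ∈ M.P) {S : ℕ → ℝ} (hS : S ∈ M.T)
    (j : ℕ) {n : ℕ} (hn : H.N S ≤ n) : H.gains j (H.N S) S = H.gains j n S := by
  refine sum_subset (Ico_subset_Ico le_rfl hn) fun i hi hni => ?_
  simp only [mem_Ico, not_and, not_lt] at hi hni
  rw [M.liquidate H hH S hS i (hni hi.1), zero_mul]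

lemma Vbar_zero_le_zero (k : ℕ) (S : ℕ → ℝ) : M.Vbar k S (fun _ => 0) ≤ 0 :=
  (iInf₂_le _ M.zero_mem).trans <| iSup₂_le fun _ _ => by simp

namespace ZeroNeutralNode

variable {M} {S : ℕ → ℝ} {j : ℕ}

lemma exists_increment_lt (h : M.ZeroNeutralNode S j) {δ : ℝ} (hδ : 0 < δ) :
    ∃ S' ∈ M.cond S j, S' (j + 1) - S j < δ := by
  have : (⨅ S' ∈ M.cond S j, ((S' (j + 1) - S j : ℝ) : EReal)) < (δ : EReal) :=
    h.2.trans_lt (EReal.coe_pos.2 hδ)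
  simpa only [iInf_lt_iff, EReal.coe_lt_coe_iff, exists_prop] using this

lemma exists_increment_gt (h : M.ZeroNeutralNode S j) {δ : ℝ} (hδ : 0 < δ) :
    ∃ S' ∈ M.cond S j, -δ < S' (j + 1) - S j := by
  have : ((-δ : ℝ) : EReal) < ⨆ S' ∈ M.cond S j, ((S' (j + 1) - S j : ℝ) : EReal) :=
    (EReal.coe_neg'.2 (neg_lt_zero.2 hδ)).trans_le h.1
  simpa only [lt_iSup_iff, EReal.coe_lt_coe_iff, exists_prop] using this

lemma exists_mul_increment_lt (h : M.ZeroNeutralNode S j) (a : ℝ) {ε : ℝ} (hε : 0 < ε) :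
    ∃ S' ∈ M.cond S j, a * (S' (j + 1) - S j) < ε := by
  set δ := ε / (|a| + 1)
  have hδ : 0 < δ := by positivity
  have haδ : |a| * δ < ε := by
    rw [mul_div_assoc', div_lt_iff₀ (by positivity)]
    nlinarith
  rcases le_or_gt 0 a with ha | ha
  · obtain ⟨S', hS', hlt⟩ := h.exists_increment_lt hδ
    refine ⟨S', hS', lt_of_le_of_lt ?_ haδ⟩
    rw [abs_of_nonneg ha]
    exact mul_le_mul_of_nonneg_left hlt.le ha
  · obtain ⟨S', hS', hlt⟩ := h.exists_increment_gt hδ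
    refine ⟨S', hS', lt_of_le_of_lt ?_ haδ⟩
    rw [abs_of_neg ha]
    nlinarith

end ZeroNeutralNode

lemma exists_mem_cond_gains_lt {Sk : ℕ → ℝ} {k : ℕ}
    (h0 : ∀ S ∈ M.cond Sk k, ∀ j : ℕ, k ≤ j → M.ZeroNeutralNode S j)
    {H : Portfolio} (hH : H ∈ M.P) (n j : ℕ) (hkj : k ≤ j) {S : ℕ → ℝ} (hS : S ∈ M.cond Sk k)
    {ε : ℝ} (hε : 0 < ε) : ∃ S' ∈ M.cond S j, H.gains j n S' < ε := by
  induction hd : n - j generalizing j S ε with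
  | zero => exact ⟨S, M.mem_cond_self hS.1 j, by rwa [H.gains_of_le _ (by omega)]⟩
  | succ d ih =>
    obtain ⟨S₁, hS₁, hstep⟩ := (h0 S hS j hkj).exists_mul_increment_lt (H.pos j S) (half_pos hε)
    obtain ⟨S', hS', htail⟩ :=
      ih (j + 1) (by omega) (M.mem_cond_trans hS₁ hS hkj) (half_pos hε) (by omega)
    have hS'j : S' ∈ M.cond S j := M.mem_cond_trans hS' hS₁ (Nat.le_succ j)
    have hpos : H.pos j S' = H.pos j S := M.nonanticipative H hH j S' hS'.1 S hS.1 hS'j.2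
    refine ⟨S', hS'j, ?_⟩
    rw [H.gains_eq_add _ (by omega), hpos, hS'.2 (j + 1) le_rfl, hS'j.2 j le_rfl]
    linarith

end Market

/-- in a bounded discrete market, if every node `(S, j)` with `j ≥ k` and
`S ∈ 𝒮_(S^k,k)` is 0-neutral, then `ℳ` is conditionally 0-neutral at `(S^k, k)`. -/
theorem conditionally_zero_neutral (M : Market)
    (hbdd : ∀ H ∈ M.P, ∃ n : ℕ, ∀ S ∈ M.T, H.N S ≤ n)
    (Sk : ℕ → ℝ) (hSk : Sk ∈ M.T) (k : ℕ)
    (h0 : ∀ S ∈ M.cond Sk k, ∀ j : ℕ, k ≤ j → M.ZeroNeutralNode S j) :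
    M.Vbar k Sk (fun _ => 0) = 0 := by
  refine le_antisymm (M.Vbar_zero_le_zero k Sk) (le_iInf₂ fun H hH => ?_)
  obtain ⟨n, hn⟩ := hbdd H hH
  refine EReal.ge_of_forall_gt_iff_ge.1 fun z hz => ?_
  obtain ⟨S', hS', hgains⟩ := M.exists_mem_cond_gains_lt h0 hH n k le_rfl
    (M.mem_cond_self hSk k) (ε := -z) (neg_pos.2 (EReal.coe_neg'.1 hz))
  refine le_trans ?_ (le_iSup₂ (f := fun S' _ => ((0 - H.gains k (H.N S') S' : ℝ) : EReal)) S' hS')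
  rw [M.gains_liquidation_eq hH hS'.1 k (hn S' hS'.1)]
  exact EReal.coe_le_coe_iff.2 (by linarith)
end

section
/- Let ℳ = 𝒮 × ℋ be an n-bounded discrete market such that 𝒮 is locally 0-neutral, and let Z be a lower minmax function with data (ν_i)_{i=1}^m, (a_i)_{i=1}^m, b, where ν_m is bounded on 𝒮. Then for any fixed S* ∈ 𝒮 and integer k ≥ 0, V̄_k(S*, Z, ℳ) ≥ A₀ s₀ + B, where B = Σ_{l=0}^{k−1} A_l(S*) Δ_l S* + b. -/
open scoped BigOperators

/-
At a 0-neutral node, whatever position `c` is held, some continuation makes the gain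
`c * Δ_j S` at least `-δ`. Following such continuations from `(S*, k)` against the
non-anticipative position `A_l - H_l` gives a path on which this position loses at most `ε` up to
a horizon beyond every `N_H` and `ν_m`. Summation by parts turns `∑ a_j S_{ν_j}` into
`A₀ s₀ + ∑_l A_l Δ_l S`, so along that path `Z` minus the gains of `H` is at least `A₀ s₀ + B - ε`.
-/

open Finset

def NonAnticipative (T : Set (ℕ → ℝ)) (g : ℕ → (ℕ → ℝ) → ℝ) : Prop :=
  ∀ i, ∀ S ∈ T, ∀ S' ∈ T, (∀ k ≤ i, S k = S' k) → g i S = g i S'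

namespace NonAnticipative

variable {T : Set (ℕ → ℝ)} {f g : ℕ → (ℕ → ℝ) → ℝ}

theorem sub (hf : NonAnticipative T f) (hg : NonAnticipative T g) :
    NonAnticipative T (f - g) := fun i S hS S' hS' h => by
  simp only [Pi.sub_apply, hf i S hS S' hS' h, hg i S hS S' hS' h]

theorem sum_Ico_gains_eq (hg : NonAnticipative T g) {S S' : ℕ → ℝ} (hS : S ∈ T) (hS' : S' ∈ T)
    {j : ℕ} (h : ∀ i ≤ j, S i = S' i) (k : ℕ) :
    ∑ l ∈ Ico k j, g l S * (S (l + 1) - S l) = ∑ l ∈ Ico k j, g l S' * (S' (l + 1) - S' l) := by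
  refine sum_congr rfl fun l hl => ?_
  have hlj : l < j := (mem_Ico.mp hl).2
  rw [hg l S hS S' hS' fun i hi => h i (hi.trans hlj.le), h l hlj.le, h (l + 1) hlj]

end NonAnticipative

theorem StoppingTime.lt_iff_lt {T : Set (ℕ → ℝ)} {ν : (ℕ → ℝ) → ℕ} (hν : StoppingTime T ν)
    {S S' : ℕ → ℝ} (hS : S ∈ T) (hS' : S' ∈ T) {l : ℕ} (h : ∀ i ≤ l, S i = S' i) :
    l < ν S ↔ l < ν S' := by
  constructor
  · intro hl
    by_contra! hle
    have := hν S' hS' S hS fun i hi => h i (hi.trans hle)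
    omega
  · intro hl
    by_contra! hle
    have := hν S hS S' hS' fun i hi => (h i (hi.trans hle)).symm
    omega

/-- The paper's `A_l(S)`. -/
def remainingWeight {ι : Type*} [Fintype ι] (ν : ι → (ℕ → ℝ) → ℕ) (a : ι → ℝ) (l : ℕ)
    (S : ℕ → ℝ) : ℝ :=
  ∑ j ∈ univ.filter (fun j => l < ν j S), a j

section remainingWeight

variable {ι : Type*} [Fintype ι] {ν : ι → (ℕ → ℝ) → ℕ} (a : ι → ℝ)

theorem nonAnticipative_remainingWeight {T : Set (ℕ → ℝ)} (hν : ∀ j, StoppingTime T (ν j)) :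
    NonAnticipative T (remainingWeight ν a) := fun l S hS S' hS' h => by
  classical
  unfold remainingWeight
  congr 1
  ext j
  simp only [mem_filter, mem_univ, true_and, (hν j).lt_iff_lt hS hS' h]

theorem sum_mul_apply_eq_sum_remainingWeight {S : ℕ → ℝ} {T : ℕ} (hνT : ∀ j, ν j S ≤ T) :
    ∑ j, a j * S (ν j S) =
      (∑ j, a j) * S 0 + ∑ l ∈ range T, remainingWeight ν a l S * (S (l + 1) - S l) := by
  classical
  have hincr : ∀ j, S (ν j S) - S 0 =
      ∑ l ∈ range T, if l < ν j S then S (l + 1) - S l else 0 := by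
    intro j
    rw [← sum_filter, ← sum_range_sub]
    congr 1
    ext l
    simp only [mem_range, mem_filter]
    exact ⟨fun hl => ⟨hl.trans_le (hνT j), hl⟩, And.right⟩
  calc ∑ j, a j * S (ν j S)
      = (∑ j, a j) * S 0 + ∑ j, a j * (S (ν j S) - S 0) := by
        rw [sum_mul, ← sum_add_distrib]
        exact sum_congr rfl fun j _ => by ring
    _ = (∑ j, a j) * S 0 +
          ∑ l ∈ range T, ∑ j, if l < ν j S then a j * (S (l + 1) - S l) else 0 := by
        simp only [hincr, mul_sum, mul_ite, mul_zero]
        rw [sum_comm]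
    _ = _ := by
        simp only [remainingWeight, sum_mul, sum_filter, ite_mul, zero_mul]

end remainingWeight

namespace Market

variable (M : Market)

theorem exists_mem_cond_mul_increment_ge {S : ℕ → ℝ} (hS : S ∈ M.T) {j : ℕ}
    (hj : M.ZeroNeutralNode S j) (c : ℝ) {δ : ℝ} (hδ : 0 < δ) :
    ∃ S' ∈ M.cond S j, -δ ≤ c * (S' (j + 1) - S j) := by
  rcases lt_trichotomy c 0 with hc | rfl | hc
  · have : (⨅ S' ∈ M.cond S j, ((S' (j + 1) - S j : ℝ) : EReal)) < ((δ / -c : ℝ) : EReal) :=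
      hj.2.trans_lt (EReal.coe_lt_coe_iff.mpr (div_pos hδ (neg_pos.mpr hc)))
    obtain ⟨S', hS', hlt⟩ := lt_biInf_iff.mp this
    refine ⟨S', hS', ?_⟩
    rw [EReal.coe_lt_coe_iff, lt_div_iff₀ (neg_pos.mpr hc)] at hlt
    linarith
  · exact ⟨S, ⟨hS, fun _ _ => rfl⟩, by simpa using hδ.le⟩
  · have : ((-(δ / c) : ℝ) : EReal) < ⨆ S' ∈ M.cond S j, ((S' (j + 1) - S j : ℝ) : EReal) :=
      (EReal.coe_lt_coe_iff.mpr (neg_neg_of_pos (div_pos hδ hc))).trans_le hj.1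
    obtain ⟨S', hS', hlt⟩ := lt_biSup_iff.mp this
    refine ⟨S', hS', ?_⟩
    rw [EReal.coe_lt_coe_iff, neg_div', div_lt_iff₀ hc] at hlt
    linarith

theorem exists_mem_cond_sum_gains_ge (hloc : M.LocallyZeroNeutral) {g : ℕ → (ℕ → ℝ) → ℝ}
    (hg : NonAnticipative M.T g) {S : ℕ → ℝ} (hS : S ∈ M.T) (k r : ℕ) {ε : ℝ} (hε : 0 < ε) :
    ∃ S' ∈ M.cond S k, -ε ≤ ∑ l ∈ Ico k (k + r), g l S' * (S' (l + 1) - S' l) := by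
  induction r generalizing ε with
  | zero => exact ⟨S, ⟨hS, fun _ _ => rfl⟩, by simpa using hε.le⟩
  | succ r ih =>
    obtain ⟨S', ⟨hS'T, hS'S⟩, hsum⟩ := ih (half_pos hε)
    obtain ⟨S'', ⟨hS''T, hS''S'⟩, hstep⟩ :=
      M.exists_mem_cond_mul_increment_ge hS'T (hloc S' hS'T (k + r)) (g (k + r) S') (half_pos hε)
    refine ⟨S'', ⟨hS''T, fun i hi => (hS''S' i (hi.trans (k.le_add_right r))).trans (hS'S i hi)⟩,
      ?_⟩
    rw [← add_assoc, sum_Ico_succ_top (k.le_add_right r),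
      hg.sum_Ico_gains_eq hS''T hS'T hS''S',
      hg (k + r) S'' hS''T S' hS'T hS''S', hS''S' (k + r) le_rfl]
    linarith

theorem sum_Ico_gains_eq_of_N_le {H : Portfolio} (hH : H ∈ M.P) {S : ℕ → ℝ} (hS : S ∈ M.T)
    {k T : ℕ} (hT : H.N S ≤ T) :
    ∑ i ∈ Ico k (H.N S), H.pos i S * (S (i + 1) - S i) =
      ∑ i ∈ Ico k T, H.pos i S * (S (i + 1) - S i) :=
  sum_subset (Ico_subset_Ico_right hT) fun i hi hiN => by
    simp only [mem_Ico, not_and, not_lt] at hi hiN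
    rw [M.liquidate H hH S hS i (hiN hi.1), zero_mul]

theorem le_Vbar_of_forall_exists {k : ℕ} {S : ℕ → ℝ} {Z : (ℕ → ℝ) → ℝ} {x : ℝ}
    (h : ∀ H ∈ M.P, ∀ ε > 0, ∃ S' ∈ M.cond S k,
      x - ε ≤ Z S' - ∑ i ∈ Ico k (H.N S'), H.pos i S' * (S' (i + 1) - S' i)) :
    (x : EReal) ≤ M.Vbar k S Z := by
  refine le_iInf₂ fun H hH => EReal.ge_of_forall_gt_iff_ge.mp fun z hz => ?_
  obtain ⟨S', hS', hle⟩ := h H hH (x - z) (sub_pos.mpr (EReal.coe_lt_coe_iff.mp hz))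
  exact le_iSup₂_of_le S' hS' (EReal.coe_le_coe_iff.mpr (by linarith))

end Market

/-- in an `n`-bounded market with a locally 0-neutral trajectory set, if `Z`
is a lower minmax function with data `(ν_j)`, `(a_j)`, `b` and `ν_m` is bounded on `𝒮`,
then `V̄_k(S*, Z, ℳ) ≥ A₀ s₀ + B`. -/
theorem lower_minmax_bound (n : ℕ) (M : Market) (hn : M.NBounded n)
    (hloc : M.LocallyZeroNeutral) (m : ℕ)
    (ν : Fin (m + 1) → (ℕ → ℝ) → ℕ) (a : Fin (m + 1) → ℝ) (b : ℝ)
    (hstop : ∀ j, StoppingTime M.T (ν j))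
    (hmono : ∀ S ∈ M.T, StrictMono (fun j => ν j S))
    (hνbdd : ∃ C : ℕ, ∀ S ∈ M.T, ν (Fin.last m) S ≤ C)
    (Z : (ℕ → ℝ) → ℝ)
    (hZ : ∀ S ∈ M.T, ∑ j, a j * S (ν j S) + b ≤ Z S)
    (A : ℕ → (ℕ → ℝ) → ℝ)
    (hA : ∀ (l : ℕ) (S : ℕ → ℝ),
      A l S = ∑ j ∈ Finset.univ.filter (fun j : Fin (m + 1) => l < ν j S), a j)
    (Sstar : ℕ → ℝ) (hSstar : Sstar ∈ M.T) (k : ℕ) :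
    (((∑ j, a j) * M.s0 +
      (∑ l ∈ Finset.range k, A l Sstar * (Sstar (l + 1) - Sstar l) + b) : ℝ) : EReal) ≤
    M.Vbar k Sstar Z := by
  obtain ⟨C, hC⟩ := hνbdd
  obtain rfl : A = remainingWeight ν a := funext₂ hA
  have hw := nonAnticipative_remainingWeight a hstop
  refine M.le_Vbar_of_forall_exists fun H hH ε hε => ?_
  obtain ⟨S, ⟨hS, hagree⟩, hgains⟩ :=
    M.exists_mem_cond_sum_gains_ge hloc (hw.sub (M.nonanticipative H hH)) hSstar k (max n C) hε
  refine ⟨S, ⟨hS, hagree⟩, ?_⟩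
  set T := k + max n C
  have hνT : ∀ j, ν j S ≤ T := fun j =>
    ((hmono S hS).monotone (Fin.le_last j)).trans ((hC S hS).trans (by omega))
  have hprefix := hw.sum_Ico_gains_eq hSstar hS (fun i hi => (hagree i hi).symm) 0
  rw [← range_eq_Ico] at hprefix
  have hsplit := sum_range_add_sum_Ico
    (fun l => remainingWeight ν a l S * (S (l + 1) - S l)) (k.le_add_right (max n C))
  simp only [Pi.sub_apply, sub_mul, sum_sub_distrib] at hgains
  rw [M.sum_Ico_gains_eq_of_N_le hH hS ((hn H hH S hS).trans (by omega) : H.N S ≤ T)]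
  have hpayoff := hZ S hS
  rw [sum_mul_apply_eq_sum_remainingWeight a hνT, M.start S hS] at hpayoff
  linarith
end
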